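/- For all positive integers n, the lion number of the triangular grid graph satisfies L(T_n) ≤ n+1: n+1 lions starting on the n+1 vertices of column 0, sweeping column by column (moving each lion one step right in successive turns, bottom to top, with the apex lion of each column staying put when its column shrinks), clear T_n of all contamination. -/

import Mathlib

/-- `lionContam G P t v` : vertex `v` is contaminated after turn `t`, when the
lions move according to `P`. Initially every unoccupied vertex is contaminated;
each turn contamination spreads along every edge not traversed by a lion that
turn, and a vertex occupied by a lion is clear. -/
def lionContam {V : Type*} (G : SimpleGraph V) {L : ℕ} (P : ℕ → Fin L → V) :
    ℕ → V → Prop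
  | 0, v => ∀ j, P 0 j ≠ v
  | (t+1), v => (∀ j, P (t+1) j ≠ v) ∧
      (lionContam G P t v ∨ ∃ u, lionContam G P t u ∧ G.Adj u v ∧
        ¬ ∃ j, (P t j = u ∧ P (t+1) j = v) ∨ (P t j = v ∧ P (t+1) j = u))

/-- `L` lions have a winning strategy in the Lions and Contamination game on `G`. -/
def lionClears {V : Type*} (G : SimpleGraph V) (L : ℕ) : Prop :=
  ∃ (P : ℕ → Fin L → V) (T : ℕ),
    (∀ t j, P (t+1) j = P t j ∨ G.Adj (P t j) (P (t+1) j)) ∧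
    ∀ v, ¬ lionContam G P T v

/-- The searcher wins the Zero-Visibility `k`-Search game on `G`:
some finite sequence of searches of at most `k` vertices per turn catches every
intruder trajectory (which moves along an edge or stays put each turn). -/
def searchWins {V : Type*} [DecidableEq V] (G : SimpleGraph V) (k : ℕ) : Prop :=
  ∃ (S : ℕ → Finset V) (T : ℕ),
    (∀ t, (S t).card ≤ k) ∧
    ∀ w : ℕ → V, (∀ t, w (t+1) = w t ∨ G.Adj (w t) (w (t+1))) →
      ∃ t < T, w t ∈ S t

/-- Vertices of the triangular grid graph `T_n`. -/
def TriV (n : ℕ) := {v : ℕ × ℕ // v.1 + v.2 ≤ n}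

/-- The triangular grid graph `T_n`. -/
def TnGraph (n : ℕ) : SimpleGraph (TriV n) where
  Adj u v :=
    (v.val.1 = u.val.1 + 1 ∧ v.val.2 = u.val.2) ∨ (u.val.1 = v.val.1 + 1 ∧ u.val.2 = v.val.2) ∨
    (v.val.2 = u.val.2 + 1 ∧ v.val.1 = u.val.1) ∨ (u.val.2 = v.val.2 + 1 ∧ u.val.1 = v.val.1) ∨
    (v.val.1 = u.val.1 + 1 ∧ u.val.2 = v.val.2 + 1) ∨ (u.val.1 = v.val.1 + 1 ∧ v.val.2 = u.val.2 + 1)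
  symm := by constructor; intro u v h; tauto
  loopless := by constructor; intro u h; omega

namespace LionSweep

/-- Column of lion `j` at time `t` in the sweep of `T_n`. -/
def tcol (n t j : ℕ) : ℕ := min ((t + n - j) / (n + 1)) (n - j)

lemma tcol_le (n t j : ℕ) : tcol n t j ≤ n - j := min_le_right _ _

/-- Position of lion `j` at time `t`. -/
def Pos (n : ℕ) (t : ℕ) (j : Fin (n+1)) : TriV n :=
  ⟨(tcol n t j.val, j.val), by
    have h1 := tcol_le n t j.val
    have h2 := j.isLt
    omega⟩

lemma pos_eq_iff (n t : ℕ) (j : Fin (n+1)) (a b : ℕ) (hab : a + b ≤ n) :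
    Pos n t j = ⟨(a,b),hab⟩ ↔ (tcol n t j.val = a ∧ j.val = b) := by
  rw [Pos]
  exact ⟨fun h => Prod.mk.inj (congrArg Subtype.val h), fun h => Subtype.ext (Prod.ext h.1 h.2)⟩

lemma tcol_zero (n j : ℕ) : tcol n 0 j = 0 := by
  unfold tcol
  rw [Nat.div_eq_of_lt (by omega)]
  omega

lemma tcol_lt {n k y : ℕ} (c : ℕ) (hk : k ≤ n+1) (hy : y ≤ n) (h : y < k) :
    tcol n (c*(n+1)+k) y = min (c+1) (n-y) := by
  have e : (n+1)*(c+1) = c*(n+1)+(n+1) := by ring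
  have h1 : c*(n+1)+k+n-y = (n+1)*(c+1) + (k-y-1) := by omega
  unfold tcol
  rw [h1, Nat.mul_add_div (by omega), Nat.div_eq_of_lt (by omega)]

lemma tcol_ge {n k y : ℕ} (c : ℕ) (hk : k ≤ n+1) (hy : y ≤ n) (h : k ≤ y) :
    tcol n (c*(n+1)+k) y = min c (n-y) := by
  have e : (n+1)*c = c*(n+1) := by ring
  have h1 : c*(n+1)+k+n-y = (n+1)*c + (k+n-y) := by omega
  unfold tcol
  rw [h1, Nat.mul_add_div (by omega), Nat.div_eq_of_lt (by omega)]
  omega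

lemma tcol_step (n t j : ℕ) : tcol n (t+1) j = tcol n t j ∨ tcol n (t+1) j = tcol n t j + 1 := by
  have m1 : (t+n-j)/(n+1) ≤ (t+1+n-j)/(n+1) := Nat.div_le_div_right (by omega)
  have m2 : (t+1+n-j)/(n+1) ≤ (t+n-j)/(n+1) + 1 := by
    calc (t+1+n-j)/(n+1) ≤ ((t+n-j)+(n+1))/(n+1) := Nat.div_le_div_right (by omega)
    _ = (t+n-j)/(n+1) + 1 := Nat.add_div_right _ (by omega)
  unfold tcol
  omega

lemma divmod_eq {n c k : ℕ} (hk : k ≤ n) :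
    (c*(n+1)+k)/(n+1) = c ∧ (c*(n+1)+k)%(n+1) = k := by
  rw [show c*(n+1)+k = (n+1)*c+k by ring, Nat.mul_add_div (by omega), Nat.mul_add_mod,
    Nat.div_eq_of_lt (by omega), Nat.mod_eq_of_lt (by omega)]
  omega

end LionSweep

namespace LionSweep

lemma step_main (n c k t : ℕ) (hk : k ≤ n) (ht : t = c*(n+1)+k)
    (ih : ∀ v : TriV n, lionContam (TnGraph n) (Pos n) t v ↔
       (c+2 ≤ v.val.1 ∨ (v.val.1 = c+1 ∧ k ≤ v.val.2))) (v : TriV n) :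
    lionContam (TnGraph n) (Pos n) (t+1) v ↔
      (c+2 ≤ v.val.1 ∨ (v.val.1 = c+1 ∧ k+1 ≤ v.val.2)) := by
  obtain ⟨⟨a, b⟩, hab⟩ := v
  have hab' : a + b ≤ n := hab
  have hb : b ≤ n := by omega
  have ht1 : t+1 = c*(n+1)+(k+1) := by omega
  simp only [lionContam]
  constructor
  · rintro ⟨hunocc, hsp⟩
    by_contra hnv
    -- occupancy contradiction devices
    have hvb : ∀ (_ : tcol n (t+1) b = a), False := by
      intro h
      exact hunocc ⟨b, by omega⟩ ((pos_eq_iff n (t+1) ⟨b, by omega⟩ a b hab).2 ⟨h, rfl⟩)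
    have occC : ∀ (_ : b ≤ k) (_ : a = c+1), False := by
      intro hbk ha
      apply hvb
      rw [ht1, tcol_lt c (by omega) hb (by omega)]
      omega
    have occC2 : ∀ (_ : k+1 ≤ b) (_ : a = c), False := by
      intro hbk ha
      apply hvb
      rw [ht1, tcol_ge c (by omega) hb hbk]
      omega
    rcases hsp with hv | ⟨⟨⟨p,q⟩,hpq⟩, hu, hadj, htrav⟩
    · have h2 := (ih ⟨(a,b),hab⟩).1 hv
      simp only at h2
      -- must be a = c+1, b = k
      have ha : a = c+1 := by omega
      exact occC (by omega) ha
    · have hu' := (ih ⟨(p,q),hpq⟩).1 hu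
      simp only at hu'
      have hpq' : p + q ≤ n := hpq
      have hq : q ≤ n := by omega
      simp only [TnGraph] at hadj
      rcases hadj with ⟨h1,h2⟩|⟨h1,h2⟩|⟨h1,h2⟩|⟨h1,h2⟩|⟨h1,h2⟩|⟨h1,h2⟩
      · -- D1 : a = p+1, b = q
        omega
      · -- D2 : p = a+1, q = b
        rcases hu' with hp | ⟨hp, hqk⟩
        · exact occC (by omega) (by omega)
        · -- p = c+1, a = c, b = q ≥ k
          rcases Nat.eq_or_lt_of_le hqk with hbk | hbk
          · -- b = k : traversal
            have hA : tcol n t k = min c (n-k) := by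
              have h' := tcol_ge (n := n) (k := k) (y := k) c (by omega) (by omega) le_rfl
              rwa [← ht] at h'
            have hB : tcol n (t+1) k = min (c+1) (n-k) := by
              have h' := tcol_lt (n := n) (k := k+1) (y := k) c (by omega) (by omega) (by omega)
              rwa [← ht1] at h'
            apply htrav
            refine ⟨⟨k, by omega⟩, Or.inr ⟨?_, ?_⟩⟩
            · rw [pos_eq_iff n t ⟨k, by omega⟩ a b hab]
              exact ⟨by show tcol n t k = a; omega, by show k = b; omega⟩
            · rw [pos_eq_iff n (t+1) ⟨k, by omega⟩ p q hpq]
              exact ⟨by show tcol n (t+1) k = p; omega, by show k = q; omega⟩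
          · exact occC2 (by omega) (by omega)
      · -- D3 : b = q+1, a = p
        omega
      · -- D4 : q = b+1, p = a
        rcases hu' with hp | ⟨hp, hqk⟩
        · omega
        · exact occC (by omega) (by omega)
      · -- D5 : a = p+1, q = b+1
        omega
      · -- D6 : p = a+1, b = q+1
        rcases hu' with hp | ⟨hp, hqk⟩
        · exact occC (by omega) (by omega)
        · exact occC2 (by omega) (by omega)
  · intro hinv
    refine ⟨?_, Or.inl ((ih ⟨(a,b),hab⟩).2 (by simp only; omega))⟩
    intro j hj
    obtain ⟨hjcol, hjb⟩ := (pos_eq_iff n (t+1) j a b hab).1 hj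
    rcases Nat.lt_or_ge j.val (k+1) with h | h
    · rw [ht1, tcol_lt c (by omega) (by omega) h] at hjcol
      omega
    · rw [ht1, tcol_ge c (by omega) (by omega) h] at hjcol
      omega

lemma contam_iff (n : ℕ) : ∀ t (v : TriV n),
    lionContam (TnGraph n) (Pos n) t v ↔
      (t/(n+1) + 2 ≤ v.val.1 ∨ (v.val.1 = t/(n+1) + 1 ∧ t % (n+1) ≤ v.val.2)) := by
  intro t
  induction t with
  | zero =>
    intro v
    obtain ⟨⟨a, b⟩, hab⟩ := v
    have hab' : a + b ≤ n := hab
    simp only [lionContam, Nat.zero_div, Nat.zero_mod]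
    constructor
    · intro h
      by_contra hc
      have ha : a = 0 := by omega
      exact h ⟨b, by omega⟩ ((pos_eq_iff n 0 ⟨b, by omega⟩ a b hab).2 ⟨by rw [tcol_zero]; omega, rfl⟩)
    · intro h j hj
      obtain ⟨hjcol, hjb⟩ := (pos_eq_iff n 0 j a b hab).1 hj
      rw [tcol_zero] at hjcol
      omega
  | succ t ih =>
    intro v
    have hk : t % (n+1) ≤ n := by
      have := Nat.mod_lt t (y := n+1) (by omega)
      omega
    have hck : t = (t/(n+1))*(n+1) + t%(n+1) := by
      rw [mul_comm]
      exact (Nat.div_add_mod t (n+1)).symm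
    have main := step_main n (t/(n+1)) (t%(n+1)) t hk hck ih v
    rcases Nat.lt_or_ge (t % (n+1)) n with hkn | hkn
    · have h1 : t+1 = (t/(n+1))*(n+1)+(t%(n+1)+1) := by omega
      have hd := divmod_eq (n := n) (c := t/(n+1)) (k := t%(n+1)+1) (by omega)
      rw [main, h1, hd.1, hd.2]
    · -- t % (n+1) = n
      have e : (t/(n+1)+1)*(n+1) = (t/(n+1))*(n+1)+(n+1) := by ring
      have h1 : t+1 = (t/(n+1)+1)*(n+1)+0 := by omega
      have hd := divmod_eq (n := n) (c := t/(n+1)+1) (k := 0) (by omega)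
      rw [main, h1, hd.1, hd.2]
      obtain ⟨⟨a, b⟩, hab⟩ := v
      have hab' : a + b ≤ n := hab
      simp only
      omega

end LionSweep

theorem lion_number_upper (n : ℕ) (hn : 0 < n) :
    ∃ (P : ℕ → Fin (n + 1) → TriV n) (T : ℕ),
      (∀ t j, P (t+1) j = P t j ∨ (TnGraph n).Adj (P t j) (P (t+1) j)) ∧
      (∀ j : Fin (n + 1), (P 0 j).val = (0, (j : ℕ))) ∧
      (∀ v, ¬ lionContam (TnGraph n) P T v) := by
  refine ⟨LionSweep.Pos n, n*(n+1), ?_, ?_, ?_⟩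
  · intro t j
    rcases LionSweep.tcol_step n t j.val with h | h
    · left
      apply Subtype.ext
      show (LionSweep.tcol n (t+1) j.val, j.val) = (LionSweep.tcol n t j.val, j.val)
      rw [h]
    · right
      exact Or.inl ⟨h, rfl⟩
  · intro j
    show (LionSweep.tcol n 0 j.val, j.val) = (0, (j : ℕ))
    rw [LionSweep.tcol_zero]
  · intro v
    rw [LionSweep.contam_iff]
    have hd := LionSweep.divmod_eq (n := n) (c := n) (k := 0) (Nat.zero_le n)
    have e1 : (n*(n+1))/(n+1) = n := by simpa using hd.1
    have e2 : (n*(n+1))%(n+1) = 0 := by simpa using hd.2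
    rw [e1, e2]
    obtain ⟨⟨a,b⟩,hab⟩ := v
    have hab' : a + b ≤ n := hab
    simp only
    omega
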